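/- There exists a constant C > 0 depending only on K₀, σ_L, σ_U such that for all measurable functions b, b₀ : [0,1] → ℝ with |b(x)| ≤ K₀ and |b₀(x)| ≤ K₀ for all x ∈ [0,1], one has |H_b − H_{b₀}| ≤ C ‖b − b₀‖₂. -/

import Mathlib

open MeasureTheory Real

/-- `I_b(x) = ∫₀ˣ 2 b(y) / σ(y)² dy`. -/
noncomputable def Ib (σ b : ℝ → ℝ) (x : ℝ) : ℝ :=
  ∫ y in (0:ℝ)..x, 2 * b y / (σ y) ^ 2

/-- The normalising constant `H_b`. -/
noncomputable def Hb (σ b : ℝ → ℝ) : ℝ :=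
  ∫ x in (0:ℝ)..1, (Real.exp (Ib σ b x) / (σ x) ^ 2) *
    (Real.exp (Ib σ b 1) * (∫ y in x..(1:ℝ), Real.exp (-(Ib σ b y))) +
      ∫ y in (0:ℝ)..x, Real.exp (-(Ib σ b y)))

/-- The `L²([0,1])`-norm of a function. -/
noncomputable def L2norm (f : ℝ → ℝ) : ℝ :=
  Real.sqrt (∫ x in (0:ℝ)..1, f x ^ 2)

/-!
`I_b` depends on `b` in an `L¹`-Lipschitz way, uniformly on `[0,1]`: `|I_b - I_{b₀}| ≤ 2/σ_L² ‖b - b₀‖₁`,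
and `|I_b| ≤ M := 2K₀/σ_L²`. As `exp` is `e^M`-Lipschitz on `[-M, M]`, each factor of the integrand of
`H_b` (the speed density `e^{I_b}/σ²`, `e^{I_b(1)}` and the integrals of the scale density `e^{-I_b}`)
is bounded by a constant and moves by a constant times `‖b - b₀‖₁`; hence so does the integrand, and
`‖b - b₀‖₁ ≤ ‖b - b₀‖₂` on `[0,1]`.
-/

open Set intervalIntegral

theorem abs_exp_sub_exp_le_of_abs_le {x y M : ℝ} (hx : |x| ≤ M) (hy : |y| ≤ M) :
    |exp x - exp y| ≤ exp M * |x - y| := by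
  wlog hyx : y ≤ x generalizing x y
  · rw [abs_sub_comm, abs_sub_comm x]
    exact this hy hx (le_of_not_ge hyx)
  have hexp : exp y = exp x * exp (y - x) := by rw [← exp_add, add_sub_cancel]
  have hxM : exp x ≤ exp M := exp_le_exp.2 (abs_le.1 hx).2
  rw [abs_of_nonneg (sub_nonneg.2 (exp_le_exp.2 hyx)), abs_of_nonneg (sub_nonneg.2 hyx), hexp]
  nlinarith [add_one_le_exp (y - x), exp_pos x]

theorem abs_mul_sub_mul_le {a b c d A B : ℝ} (ha : |a| ≤ A) (hd : |d| ≤ B) :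
    |a * b - c * d| ≤ A * |b - d| + |a - c| * B :=
  calc |a * b - c * d| = |a * (b - d) + (a - c) * d| := by ring_nf
    _ ≤ |a| * |b - d| + |a - c| * |d| := by rw [← abs_mul, ← abs_mul]; exact abs_add_le _ _
    _ ≤ A * |b - d| + |a - c| * B := by gcongr

theorem abs_div_sq_le_div_sq {y s c : ℝ} (hc : 0 < c) (hcs : c ≤ s) :
    |y / s ^ 2| ≤ |y| / c ^ 2 := by
  rw [abs_div, abs_of_nonneg (sq_nonneg s)]
  gcongr

section Interval

variable {f : ℝ → ℝ} {a b c u v : ℝ}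

theorem integrableOn_Icc_of_abs_le (hf : AEStronglyMeasurable f (volume.restrict (Icc a b)))
    (hfc : ∀ x ∈ Icc a b, |f x| ≤ c) : IntegrableOn f (Icc a b) :=
  .of_bound measure_Icc_lt_top hf c (ae_restrict_of_forall_mem measurableSet_Icc hfc)

theorem intervalIntegrable_of_abs_le (hf : Measurable f) (hfc : ∀ x ∈ Icc a b, |f x| ≤ c)
    (hu : u ∈ Icc a b) (hv : v ∈ Icc a b) : IntervalIntegrable f volume u v :=
  ((integrableOn_Icc_of_abs_le hf.aestronglyMeasurable hfc).mono_set
    (uIcc_subset_Icc hu hv)).intervalIntegrable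

theorem abs_intervalIntegral_le_of_abs_le (hfc : ∀ x ∈ Icc a b, |f x| ≤ c)
    (hu : u ∈ Icc a b) (hv : v ∈ Icc a b) : |∫ x in u..v, f x| ≤ c * (b - a) := by
  have hc : 0 ≤ c := (abs_nonneg _).trans (hfc u hu)
  calc |∫ x in u..v, f x| ≤ c * |v - u| := by
        simpa only [Real.norm_eq_abs] using norm_integral_le_of_norm_le_const (f := f) fun x hx =>
          hfc x (uIcc_subset_Icc hu hv (uIoc_subset_uIcc hx))
    _ ≤ c * (b - a) := by
        gcongr
        exact abs_sub_le_iff.2 ⟨by linarith [hv.2, hu.1], by linarith [hu.2, hv.1]⟩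

end Interval

theorem integral_abs_le_L2norm {g : ℝ → ℝ} (hg : IntervalIntegrable g volume 0 1)
    (hg2 : IntervalIntegrable (fun x => g x ^ 2) volume 0 1) :
    ∫ x in (0:ℝ)..1, |g x| ≤ L2norm g := by
  set m := ∫ x in (0:ℝ)..1, |g x|
  have hvar : ∫ x in (0:ℝ)..1, (|g x| - m) ^ 2 = (∫ x in (0:ℝ)..1, g x ^ 2) - m ^ 2 := by
    have hexpand : ∀ x, (|g x| - m) ^ 2 = g x ^ 2 - 2 * m * |g x| + m ^ 2 := fun x => by
      rw [sub_sq, sq_abs]; ring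
    simp_rw [hexpand]
    rw [integral_add (hg2.sub (hg.abs.const_mul _)) intervalIntegrable_const,
      integral_sub hg2 (hg.abs.const_mul _), intervalIntegral.integral_const_mul,
      intervalIntegral.integral_const]
    simp only [sub_zero, one_smul]
    ring
  have hnonneg : 0 ≤ ∫ x in (0:ℝ)..1, (|g x| - m) ^ 2 :=
    integral_nonneg zero_le_one fun _ _ => sq_nonneg _
  exact (le_abs_self m).trans (abs_le_sqrt (by linarith))

section DriftIntegral

variable {σ b b₀ : ℝ → ℝ} {σL K : ℝ}

theorem abs_two_mul_div_sq_le {y s : ℝ} (hσL : 0 < σL) (hs : σL ≤ s) :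
    |2 * y / s ^ 2| ≤ 2 / σL ^ 2 * |y| :=
  calc |2 * y / s ^ 2| ≤ |2 * y| / σL ^ 2 := abs_div_sq_le_div_sq hσL hs
    _ = 2 / σL ^ 2 * |y| := by rw [abs_mul, abs_two]; ring

theorem intervalIntegrable_two_mul_div_sq (hσL : 0 < σL) (hσm : Measurable σ)
    (hσ : ∀ x ∈ Icc (0:ℝ) 1, σL ≤ σ x) (hb : Measurable b) (hbK : ∀ x ∈ Icc (0:ℝ) 1, |b x| ≤ K)
    {x : ℝ} (hx : x ∈ Icc (0:ℝ) 1) :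
    IntervalIntegrable (fun y => 2 * b y / σ y ^ 2) volume 0 x := by
  refine intervalIntegrable_of_abs_le (c := 2 / σL ^ 2 * K) (by fun_prop) (fun y hy => ?_)
    unitInterval.zero_mem hx
  exact (abs_two_mul_div_sq_le hσL (hσ y hy)).trans (by gcongr; exact hbK y hy)

theorem continuousOn_Ib (hσL : 0 < σL) (hσm : Measurable σ)
    (hσ : ∀ x ∈ Icc (0:ℝ) 1, σL ≤ σ x) (hb : Measurable b) (hbK : ∀ x ∈ Icc (0:ℝ) 1, |b x| ≤ K) :
    ContinuousOn (Ib σ b) (Icc 0 1) := by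
  have h := continuousOn_primitive_interval'
    (intervalIntegrable_two_mul_div_sq hσL hσm hσ hb hbK unitInterval.one_mem) left_mem_uIcc
  rw [uIcc_of_le zero_le_one] at h
  exact h

theorem abs_Ib_le_integral_abs (hσL : 0 < σL) (hσm : Measurable σ)
    (hσ : ∀ x ∈ Icc (0:ℝ) 1, σL ≤ σ x) (hb : Measurable b) (hbK : ∀ x ∈ Icc (0:ℝ) 1, |b x| ≤ K)
    {x : ℝ} (hx : x ∈ Icc (0:ℝ) 1) :
    |Ib σ b x| ≤ 2 / σL ^ 2 * ∫ y in (0:ℝ)..1, |b y| := by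
  have hbi : ∀ {u}, u ∈ Icc (0:ℝ) 1 → IntervalIntegrable (fun y => 2 / σL ^ 2 * |b y|) volume 0 u :=
    fun hu => (intervalIntegrable_of_abs_le hb hbK unitInterval.zero_mem hu).abs.const_mul _
  calc |Ib σ b x| ≤ ∫ y in (0:ℝ)..x, |2 * b y / σ y ^ 2| := abs_integral_le_integral_abs hx.1
    _ ≤ ∫ y in (0:ℝ)..x, 2 / σL ^ 2 * |b y| :=
        integral_mono_on hx.1 (intervalIntegrable_two_mul_div_sq hσL hσm hσ hb hbK hx).abs
          (hbi hx) fun y hy => abs_two_mul_div_sq_le hσL (hσ y ⟨hy.1, hy.2.trans hx.2⟩)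
    _ ≤ ∫ y in (0:ℝ)..1, 2 / σL ^ 2 * |b y| :=
        integral_mono_interval le_rfl hx.1 hx.2 (ae_of_all _ fun y => by positivity)
          (hbi unitInterval.one_mem)
    _ = 2 / σL ^ 2 * ∫ y in (0:ℝ)..1, |b y| := intervalIntegral.integral_const_mul _ _

theorem abs_Ib_le (hσL : 0 < σL) (hσm : Measurable σ)
    (hσ : ∀ x ∈ Icc (0:ℝ) 1, σL ≤ σ x) (hb : Measurable b) (hbK : ∀ x ∈ Icc (0:ℝ) 1, |b x| ≤ K)
    {x : ℝ} (hx : x ∈ Icc (0:ℝ) 1) : |Ib σ b x| ≤ 2 / σL ^ 2 * K := by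
  have hK : ∫ y in (0:ℝ)..1, |b y| ≤ K := (le_abs_self _).trans <|
    (abs_intervalIntegral_le_of_abs_le (by simpa only [abs_abs] using hbK)
      unitInterval.zero_mem unitInterval.one_mem).trans_eq (by ring)
  calc |Ib σ b x| ≤ 2 / σL ^ 2 * ∫ y in (0:ℝ)..1, |b y| :=
        abs_Ib_le_integral_abs hσL hσm hσ hb hbK hx
    _ ≤ 2 / σL ^ 2 * K := by gcongr

theorem abs_Ib_sub_Ib_le (hσL : 0 < σL) (hσm : Measurable σ)
    (hσ : ∀ x ∈ Icc (0:ℝ) 1, σL ≤ σ x) (hb : Measurable b) (hbK : ∀ x ∈ Icc (0:ℝ) 1, |b x| ≤ K)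
    (hb₀ : Measurable b₀) (hb₀K : ∀ x ∈ Icc (0:ℝ) 1, |b₀ x| ≤ K) {x : ℝ} (hx : x ∈ Icc (0:ℝ) 1) :
    |Ib σ b x - Ib σ b₀ x| ≤ 2 / σL ^ 2 * ∫ y in (0:ℝ)..1, |b y - b₀ y| := by
  have hsub : Ib σ b x - Ib σ b₀ x = Ib σ (fun y => b y - b₀ y) x := by
    rw [Ib, Ib, Ib, ← integral_sub (intervalIntegrable_two_mul_div_sq hσL hσm hσ hb hbK hx)
      (intervalIntegrable_two_mul_div_sq hσL hσm hσ hb₀ hb₀K hx)]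
    congr 1
    ext y
    ring
  rw [hsub]
  exact abs_Ib_le_integral_abs (K := 2 * K) hσL hσm hσ (hb.sub hb₀)
    (fun y hy => (abs_sub _ _).trans (by linarith [hbK y hy, hb₀K y hy])) hx

end DriftIntegral

section Hb

variable {σ I J : ℝ → ℝ} {σL M δ x : ℝ}

noncomputable def speedDensity (σ I : ℝ → ℝ) (x : ℝ) : ℝ :=
  exp (I x) / σ x ^ 2

noncomputable def hbWeight (I : ℝ → ℝ) (x : ℝ) : ℝ :=
  exp (I 1) * (∫ y in x..1, exp (-I y)) + ∫ y in (0:ℝ)..x, exp (-I y)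

theorem Hb_eq_integral_speedDensity_mul_hbWeight (σ b : ℝ → ℝ) :
    Hb σ b = ∫ x in (0:ℝ)..1, speedDensity σ (Ib σ b) x * hbWeight (Ib σ b) x :=
  rfl

theorem abs_exp_le_exp (hIM : ∀ x ∈ Icc (0:ℝ) 1, |I x| ≤ M) (hx : x ∈ Icc (0:ℝ) 1) :
    |exp (I x)| ≤ exp M := by
  rw [abs_exp]
  exact exp_le_exp.2 ((le_abs_self _).trans (hIM x hx))

theorem abs_exp_sub_exp_le (hIM : ∀ x ∈ Icc (0:ℝ) 1, |I x| ≤ M)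
    (hJM : ∀ x ∈ Icc (0:ℝ) 1, |J x| ≤ M) (hIJ : ∀ x ∈ Icc (0:ℝ) 1, |I x - J x| ≤ δ)
    (hx : x ∈ Icc (0:ℝ) 1) : |exp (I x) - exp (J x)| ≤ exp M * δ :=
  (abs_exp_sub_exp_le_of_abs_le (hIM x hx) (hJM x hx)).trans (by gcongr; exact hIJ x hx)

theorem abs_integral_exp_neg_le (hIM : ∀ x ∈ Icc (0:ℝ) 1, |I x| ≤ M) {u v : ℝ}
    (hu : u ∈ Icc (0:ℝ) 1) (hv : v ∈ Icc (0:ℝ) 1) : |∫ y in u..v, exp (-I y)| ≤ exp M := by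
  have hbound : ∀ y ∈ Icc (0:ℝ) 1, |exp (-I y)| ≤ exp M := fun y hy => by
    rw [abs_exp]
    exact exp_le_exp.2 ((neg_le_abs _).trans (hIM y hy))
  simpa using abs_intervalIntegral_le_of_abs_le hbound hu hv

theorem abs_integral_exp_neg_sub_le (hI : ContinuousOn I (Icc 0 1))
    (hJ : ContinuousOn J (Icc 0 1)) (hIM : ∀ x ∈ Icc (0:ℝ) 1, |I x| ≤ M)
    (hJM : ∀ x ∈ Icc (0:ℝ) 1, |J x| ≤ M) (hIJ : ∀ x ∈ Icc (0:ℝ) 1, |I x - J x| ≤ δ) {u v : ℝ}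
    (hu : u ∈ Icc (0:ℝ) 1) (hv : v ∈ Icc (0:ℝ) 1) :
    |(∫ y in u..v, exp (-I y)) - ∫ y in u..v, exp (-J y)| ≤ exp M * δ := by
  have hint : ∀ {K : ℝ → ℝ}, ContinuousOn K (Icc 0 1) →
      IntervalIntegrable (fun y => exp (-K y)) volume u v := fun hK =>
    ((continuous_exp.comp_continuousOn hK.neg).mono (uIcc_subset_Icc hu hv)).intervalIntegrable
  have hbound : ∀ y ∈ Icc (0:ℝ) 1, |exp (-I y) - exp (-J y)| ≤ exp M * δ := fun y hy => by
    have h := abs_exp_sub_exp_le_of_abs_le (x := -I y) (y := -J y) (M := M)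
      (by rw [abs_neg]; exact hIM y hy) (by rw [abs_neg]; exact hJM y hy)
    rw [neg_sub_neg, abs_sub_comm (J y)] at h
    exact h.trans (by gcongr; exact hIJ y hy)
  rw [← integral_sub (hint hI) (hint hJ)]
  simpa using abs_intervalIntegral_le_of_abs_le hbound hu hv

theorem abs_hbWeight_le (hIM : ∀ x ∈ Icc (0:ℝ) 1, |I x| ≤ M) (hx : x ∈ Icc (0:ℝ) 1) :
    |hbWeight I x| ≤ exp M * exp M + exp M :=
  calc |hbWeight I x| ≤ |exp (I 1)| * |∫ y in x..1, exp (-I y)| +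
        |∫ y in (0:ℝ)..x, exp (-I y)| := by
        rw [hbWeight, ← abs_mul]
        exact abs_add_le _ _
    _ ≤ exp M * exp M + exp M := by
        gcongr
        exacts [abs_exp_le_exp hIM unitInterval.one_mem,
          abs_integral_exp_neg_le hIM hx unitInterval.one_mem,
          abs_integral_exp_neg_le hIM unitInterval.zero_mem hx]

theorem abs_hbWeight_sub_le (hI : ContinuousOn I (Icc 0 1)) (hJ : ContinuousOn J (Icc 0 1))
    (hIM : ∀ x ∈ Icc (0:ℝ) 1, |I x| ≤ M) (hJM : ∀ x ∈ Icc (0:ℝ) 1, |J x| ≤ M)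
    (hIJ : ∀ x ∈ Icc (0:ℝ) 1, |I x - J x| ≤ δ) (hx : x ∈ Icc (0:ℝ) 1) :
    |hbWeight I x - hbWeight J x| ≤ (2 * exp M + 1) * (exp M * δ) := by
  have hexp := abs_exp_sub_exp_le hIM hJM hIJ unitInterval.one_mem
  have hright := abs_integral_exp_neg_sub_le hI hJ hIM hJM hIJ hx unitInterval.one_mem
  have hleft := abs_integral_exp_neg_sub_le hI hJ hIM hJM hIJ unitInterval.zero_mem hx
  have hprod := abs_mul_sub_mul_le (b := ∫ y in x..1, exp (-I y)) (c := exp (J 1))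
    (abs_exp_le_exp hIM unitInterval.one_mem) (abs_integral_exp_neg_le hJM hx unitInterval.one_mem)
  calc |hbWeight I x - hbWeight J x|
      ≤ |exp (I 1) * (∫ y in x..1, exp (-I y)) - exp (J 1) * ∫ y in x..1, exp (-J y)| +
        |(∫ y in (0:ℝ)..x, exp (-I y)) - ∫ y in (0:ℝ)..x, exp (-J y)| := by
        rw [hbWeight, hbWeight, add_sub_add_comm]
        exact abs_add_le _ _
    _ ≤ exp M * (exp M * δ) + exp M * δ * exp M + exp M * δ := by
        gcongr
        exact hprod.trans (by gcongr)
    _ = (2 * exp M + 1) * (exp M * δ) := by ring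

theorem continuousOn_hbWeight (hI : ContinuousOn I (Icc 0 1)) :
    ContinuousOn (hbWeight I) (Icc 0 1) := by
  have hint : IntegrableOn (fun y => exp (-I y)) (uIcc 0 1) := by
    rw [uIcc_of_le zero_le_one]
    exact (continuous_exp.comp_continuousOn hI.neg).integrableOn_Icc
  have hright := continuousOn_primitive_interval_left hint
  have hleft := continuousOn_primitive_interval hint
  rw [uIcc_of_le zero_le_one] at hright hleft
  exact (continuousOn_const.mul hright).add hleft

theorem abs_speedDensity_le (hσL : 0 < σL) (hσ : ∀ x ∈ Icc (0:ℝ) 1, σL ≤ σ x)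
    (hIM : ∀ x ∈ Icc (0:ℝ) 1, |I x| ≤ M) (hx : x ∈ Icc (0:ℝ) 1) :
    |speedDensity σ I x| ≤ exp M / σL ^ 2 :=
  (abs_div_sq_le_div_sq hσL (hσ x hx)).trans (by gcongr; exact abs_exp_le_exp hIM hx)

theorem abs_speedDensity_sub_le (hσL : 0 < σL) (hσ : ∀ x ∈ Icc (0:ℝ) 1, σL ≤ σ x)
    (hIM : ∀ x ∈ Icc (0:ℝ) 1, |I x| ≤ M) (hJM : ∀ x ∈ Icc (0:ℝ) 1, |J x| ≤ M)
    (hIJ : ∀ x ∈ Icc (0:ℝ) 1, |I x - J x| ≤ δ) (hx : x ∈ Icc (0:ℝ) 1) :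
    |speedDensity σ I x - speedDensity σ J x| ≤ exp M * δ / σL ^ 2 := by
  rw [speedDensity, speedDensity, ← sub_div]
  exact (abs_div_sq_le_div_sq hσL (hσ x hx)).trans
    (by gcongr; exact abs_exp_sub_exp_le hIM hJM hIJ hx)

theorem intervalIntegrable_speedDensity_mul_hbWeight (hσL : 0 < σL) (hσm : Measurable σ)
    (hσ : ∀ x ∈ Icc (0:ℝ) 1, σL ≤ σ x) (hI : ContinuousOn I (Icc 0 1))
    (hIM : ∀ x ∈ Icc (0:ℝ) 1, |I x| ≤ M) :
    IntervalIntegrable (fun x => speedDensity σ I x * hbWeight I x) volume 0 1 := by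
  have hmeas : AEStronglyMeasurable (speedDensity σ I) (volume.restrict (Icc 0 1)) :=
    (((continuous_exp.comp_continuousOn hI).aestronglyMeasurable measurableSet_Icc).aemeasurable.div
      (hσm.pow_const 2).aemeasurable).aestronglyMeasurable
  have hdensity : IntegrableOn (speedDensity σ I) (Icc 0 1) :=
    integrableOn_Icc_of_abs_le hmeas fun x hx => abs_speedDensity_le hσL hσ hIM hx
  exact ((hdensity.mul_continuousOn (continuousOn_hbWeight hI) isCompact_Icc).mono_set
    (uIcc_subset_Icc unitInterval.zero_mem unitInterval.one_mem)).intervalIntegrable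

theorem abs_integral_speedDensity_mul_hbWeight_sub_le (hσL : 0 < σL) (hσm : Measurable σ)
    (hσ : ∀ x ∈ Icc (0:ℝ) 1, σL ≤ σ x) (hI : ContinuousOn I (Icc 0 1))
    (hJ : ContinuousOn J (Icc 0 1)) (hIM : ∀ x ∈ Icc (0:ℝ) 1, |I x| ≤ M)
    (hJM : ∀ x ∈ Icc (0:ℝ) 1, |J x| ≤ M) (hIJ : ∀ x ∈ Icc (0:ℝ) 1, |I x - J x| ≤ δ) :
    |(∫ x in (0:ℝ)..1, speedDensity σ I x * hbWeight I x) -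
        ∫ x in (0:ℝ)..1, speedDensity σ J x * hbWeight J x| ≤
      exp M ^ 2 * (3 * exp M + 2) / σL ^ 2 * δ := by
  have hbound : ∀ x ∈ Icc (0:ℝ) 1,
      |speedDensity σ I x * hbWeight I x - speedDensity σ J x * hbWeight J x| ≤
        exp M ^ 2 * (3 * exp M + 2) / σL ^ 2 * δ := fun x hx =>
    calc _ ≤ exp M / σL ^ 2 * ((2 * exp M + 1) * (exp M * δ)) +
          exp M * δ / σL ^ 2 * (exp M * exp M + exp M) :=
          (abs_mul_sub_mul_le (abs_speedDensity_le hσL hσ hIM hx) (abs_hbWeight_le hJM hx)).trans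
            (by gcongr; exacts [abs_hbWeight_sub_le hI hJ hIM hJM hIJ hx,
              abs_speedDensity_sub_le hσL hσ hIM hJM hIJ hx])
      _ = exp M ^ 2 * (3 * exp M + 2) / σL ^ 2 * δ := by ring
  rw [← integral_sub (intervalIntegrable_speedDensity_mul_hbWeight hσL hσm hσ hI hIM)
    (intervalIntegrable_speedDensity_mul_hbWeight hσL hσm hσ hJ hJM)]
  simpa using abs_intervalIntegral_le_of_abs_le hbound unitInterval.zero_mem unitInterval.one_mem

end Hb

theorem statement8 (K₀ σL σU : ℝ) (hσL : 0 < σL) :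
    ∃ C > (0:ℝ), ∀ σ : ℝ → ℝ, Measurable σ →
      (∀ x ∈ Set.Icc (0:ℝ) 1, σL ≤ σ x) →
      (∀ x ∈ Set.Icc (0:ℝ) 1, σ x ≤ σU) →
      ∀ b b₀ : ℝ → ℝ, Measurable b → Measurable b₀ →
      (∀ x ∈ Set.Icc (0:ℝ) 1, |b x| ≤ K₀) →
      (∀ x ∈ Set.Icc (0:ℝ) 1, |b₀ x| ≤ K₀) →
      |Hb σ b - Hb σ b₀| ≤ C * L2norm (fun y => b y - b₀ y) := by
  set M := 2 / σL ^ 2 * K₀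
  refine ⟨exp M ^ 2 * (3 * exp M + 2) / σL ^ 2 * (2 / σL ^ 2), by positivity, ?_⟩
  intro σ hσm hσ _ b b₀ hb hb₀ hbK hb₀K
  have hd : ∀ x ∈ Icc (0:ℝ) 1, |b x - b₀ x| ≤ 2 * K₀ := fun x hx =>
    (abs_sub _ _).trans (by linarith [hbK x hx, hb₀K x hx])
  have hL1 : ∫ y in (0:ℝ)..1, |b y - b₀ y| ≤ L2norm (fun y => b y - b₀ y) :=
    integral_abs_le_L2norm
      (intervalIntegrable_of_abs_le (hb.sub hb₀) hd unitInterval.zero_mem unitInterval.one_mem)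
      (intervalIntegrable_of_abs_le (c := (2 * K₀) ^ 2) (by fun_prop)
        (fun x hx => by rw [abs_pow]; exact pow_le_pow_left₀ (abs_nonneg _) (hd x hx) 2)
        unitInterval.zero_mem unitInterval.one_mem)
  rw [Hb_eq_integral_speedDensity_mul_hbWeight, Hb_eq_integral_speedDensity_mul_hbWeight]
  calc _ ≤ exp M ^ 2 * (3 * exp M + 2) / σL ^ 2 * (2 / σL ^ 2 * ∫ y in (0:ℝ)..1, |b y - b₀ y|) :=
        abs_integral_speedDensity_mul_hbWeight_sub_le hσL hσm hσ
          (continuousOn_Ib hσL hσm hσ hb hbK) (continuousOn_Ib hσL hσm hσ hb₀ hb₀K)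
          (fun x hx => abs_Ib_le hσL hσm hσ hb hbK hx) (fun x hx => abs_Ib_le hσL hσm hσ hb₀ hb₀K hx)
          (fun x hx => abs_Ib_sub_Ib_le hσL hσm hσ hb hbK hb₀ hb₀K hx)
    _ ≤ _ := by
        rw [mul_assoc]
        gcongr
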